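/- arXiv:1810.00583 — 2 statements merged into one kernel-verified Lean document; each statement's English description precedes it below -/
import Mathlib

section
/- Let m : ℝ≥0 → ℝ≥0 be continuous with m(t) > 0 for t > 0, and suppose t ↦ m(t)/t is non-increasing on (0,∞). Define M(t) = ∫₀ᵗ m(s) ds. Then for every θ ≥ 2n (with n ≥ 1) the function t ↦ (1/n) M(t) − (1/θ) m(t) t is non-negative and non-decreasing on [0,∞). -/
/-!
Write `c = m t / t`. Since `m u / u` is non-increasing, `m u ≥ c u` on `[s, t]`, so
`M t - M s ≥ c (t² - s²) / 2`, while `m t t - m s s ≤ c (t² - s²)`. Hence `θ ≥ 2n` makes the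
increment of `M / n` dominate that of `m t t / θ`; non-negativity follows from the value `0`
at `t = 0`.
-/

open Set

section

variable {m : ℝ → ℝ}

lemma div_mul_le_of_antitoneOn_div (hm0 : 0 ≤ m 0) (hdec : AntitoneOn (fun t => m t / t) (Ioi 0))
    {u t : ℝ} (hu : 0 ≤ u) (hut : u ≤ t) (ht : 0 < t) : m t / t * u ≤ m u := by
  rcases hu.eq_or_lt with rfl | hu
  · simpa using hm0
  calc m t / t * u ≤ m u / u * u := mul_le_mul_of_nonneg_right (hdec hu ht hut) hu.le
    _ = m u := div_mul_cancel₀ _ hu.ne'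

lemma div_mul_sq_sub_sq_le_integral (hm0 : 0 ≤ m 0) (hdec : AntitoneOn (fun t => m t / t) (Ioi 0))
    {s t : ℝ} (hint : IntervalIntegrable m MeasureTheory.volume s t) (hs : 0 ≤ s) (hst : s ≤ t)
    (ht : 0 < t) :
    m t / t * ((t ^ 2 - s ^ 2) / 2) ≤ ∫ u in s..t, m u := by
  calc m t / t * ((t ^ 2 - s ^ 2) / 2) = ∫ u in s..t, m t / t * u := by
        rw [intervalIntegral.integral_const_mul, integral_id]
    _ ≤ ∫ u in s..t, m u :=
        intervalIntegral.integral_mono_on hst ((continuous_const_mul _).intervalIntegrable _ _)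
          hint fun u hu => div_mul_le_of_antitoneOn_div hm0 hdec (hs.trans hu.1) hu.2 ht

lemma mul_self_sub_mul_self_le_of_antitoneOn_div (hm0 : 0 ≤ m 0)
    (hdec : AntitoneOn (fun t => m t / t) (Ioi 0)) {s t : ℝ} (hs : 0 ≤ s) (hst : s ≤ t)
    (ht : 0 < t) :
    m t * t - m s * s ≤ m t / t * (t ^ 2 - s ^ 2) := by
  have hms : m t / t * s * s ≤ m s * s :=
    mul_le_mul_of_nonneg_right (div_mul_le_of_antitoneOn_div hm0 hdec hs hst ht) hs
  have hmt : m t / t * t * t = m t * t := by rw [div_mul_cancel₀ _ ht.ne']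
  nlinarith

theorem monotoneOn_mul_integral_sub_mul_of_antitoneOn_div (hmc : Continuous m)
    (hm0 : ∀ t ≥ (0:ℝ), 0 ≤ m t) (hdec : AntitoneOn (fun t => m t / t) (Ioi 0))
    {α β : ℝ} (hβ : 0 ≤ β) (hαβ : 2 * β ≤ α) :
    MonotoneOn (fun t => α * (∫ u in (0:ℝ)..t, m u) - β * m t * t) (Ici 0) := by
  intro s hs t _ hst
  rcases hst.eq_or_lt with rfl | hlt
  · exact le_rfl
  have ht : 0 < t := (mem_Ici.mp hs).trans_lt hlt
  set c := m t / t
  have hc : 0 ≤ c := div_nonneg (hm0 t ht.le) ht.le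
  have hsq : 0 ≤ t ^ 2 - s ^ 2 := by nlinarith [mem_Ici.mp hs]
  have hint : (∫ u in (0:ℝ)..t, m u) - ∫ u in (0:ℝ)..s, m u = ∫ u in s..t, m u :=
    intervalIntegral.integral_interval_sub_left (hmc.intervalIntegrable _ _)
      (hmc.intervalIntegrable _ _)
  have hincr := div_mul_sq_sub_sq_le_integral (hm0 0 le_rfl) hdec (hmc.intervalIntegrable s t) hs
    hlt.le ht
  have hdiff := mul_self_sub_mul_self_le_of_antitoneOn_div (hm0 0 le_rfl) hdec hs hlt.le ht
  have hα : 0 ≤ α := by linarith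
  have hβm : β * (m t * t - m s * s) ≤ β * (c * (t ^ 2 - s ^ 2)) :=
    mul_le_mul_of_nonneg_left hdiff hβ
  have hβα : β * (c * (t ^ 2 - s ^ 2)) ≤ α / 2 * (c * (t ^ 2 - s ^ 2)) :=
    mul_le_mul_of_nonneg_right (by linarith) (mul_nonneg hc hsq)
  have hαI : α * (c * ((t ^ 2 - s ^ 2) / 2)) ≤ α * ∫ u in s..t, m u :=
    mul_le_mul_of_nonneg_left hincr hα
  rw [← hint] at hαI
  dsimp only
  linarith

end

theorem stmt0_general (n : ℕ) (hn : 1 ≤ n) (m : ℝ → ℝ) (hmc : Continuous m)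
    (hm0 : ∀ t ≥ (0:ℝ), 0 ≤ m t)
    (hmdec : ∀ s t : ℝ, 0 < s → s ≤ t → m t / t ≤ m s / s)
    (θ : ℝ) (hθ : (2 * n : ℝ) ≤ θ)
    (M : ℝ → ℝ) (hM : ∀ t, M t = ∫ s in (0:ℝ)..t, m s) :
    (∀ t ≥ (0:ℝ), 0 ≤ (1 / n) * M t - (1 / θ) * m t * t) ∧
      (∀ s t : ℝ, 0 ≤ s → s ≤ t →
        (1 / n) * M s - (1 / θ) * m s * s ≤ (1 / n) * M t - (1 / θ) * m t * t) := by
  have h2n : (0:ℝ) < 2 * n := by have : (1:ℝ) ≤ n := mod_cast hn; linarith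
  have hθ' : 2 * (1 / θ) ≤ 1 / n := by
    rw [← le_div_iff₀' two_pos, div_div, mul_comm]
    exact one_div_le_one_div_of_le h2n hθ
  have hmono := monotoneOn_mul_integral_sub_mul_of_antitoneOn_div hmc hm0
    (fun s hs t _ hst => hmdec s t hs hst) (one_div_nonneg.mpr (h2n.trans_le hθ).le) hθ'
  obtain rfl : M = fun t => ∫ s in (0:ℝ)..t, m s := funext hM
  refine ⟨fun t ht => ?_, fun s t hs hst => hmono hs (mem_Ici.mpr (hs.trans hst)) hst⟩
  simpa using hmono self_mem_Ici (mem_Ici.mpr ht) ht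

theorem stmt0 (n : ℕ) (hn : 1 ≤ n) (m : ℝ → ℝ) (hmc : Continuous m)
    (hm0 : ∀ t ≥ (0:ℝ), 0 ≤ m t) (hmpos : ∀ t > (0:ℝ), 0 < m t)
    (hmdec : ∀ s t : ℝ, 0 < s → s ≤ t → m t / t ≤ m s / s)
    (θ : ℝ) (hθ : (2 * n : ℝ) ≤ θ)
    (M : ℝ → ℝ) (hM : ∀ t, M t = ∫ s in (0:ℝ)..t, m s) :
    (∀ t ≥ (0:ℝ), 0 ≤ (1 / n) * M t - (1 / θ) * m t * t) ∧
      (∀ s t : ℝ, 0 ≤ s → s ≤ t →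
        (1 / n) * M s - (1 / θ) * m s * s ≤ (1 / n) * M t - (1 / θ) * m t * t) :=
  stmt0_general n hn m hmc hm0 hmdec θ hθ M hM
end

section
/- For every pair of vectors a₁, a₂ ∈ ℝⁿ and every integer n ≥ 2, one has |a₁ − a₂|ⁿ ≤ 2^{n−2} (|a₁|^{n−2} a₁ − |a₂|^{n−2} a₂) · (a₁ − a₂), where · denotes the Euclidean inner product and |·| the Euclidean norm. -/
/-!
Write `x = ‖a‖`, `y = ‖b‖`. Expanding the inner product gives the identity
`2 ⟪x^m a - y^m b, a - b⟫ = (x^m + y^m) ‖a - b‖² + (x^m - y^m)(x² - y²)`,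
whose last term is nonnegative because `t ↦ t^m` and `t ↦ t²` are both monotone on `[0, ∞)`.
On the other hand `‖a - b‖ ≤ x + y` and convexity of `t ↦ t^m` give
`2 ‖a - b‖^m ≤ 2^m (x^m + y^m)`. Multiplying the two bounds yields the claim with `n = m + 2`.
-/

open RealInnerProductSpace

lemma pow_sub_pow_mul_pow_sub_pow_nonneg {x y : ℝ} (hx : 0 ≤ x) (hy : 0 ≤ y) (m k : ℕ) :
    0 ≤ (x ^ m - y ^ m) * (x ^ k - y ^ k) := by
  rcases le_total x y with h | h
  · exact mul_nonneg_of_nonpos_of_nonpos (sub_nonpos.2 (pow_le_pow_left₀ hx h m))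
      (sub_nonpos.2 (pow_le_pow_left₀ hx h k))
  · exact mul_nonneg (sub_nonneg.2 (pow_le_pow_left₀ hy h m))
      (sub_nonneg.2 (pow_le_pow_left₀ hy h k))

lemma two_mul_norm_sub_pow_le {E : Type*} [SeminormedAddCommGroup E] (m : ℕ) (a b : E) :
    2 * ‖a - b‖ ^ m ≤ 2 ^ m * (‖a‖ ^ m + ‖b‖ ^ m) := by
  cases m with
  | zero => norm_num
  | succ k =>
    calc 2 * ‖a - b‖ ^ (k + 1) ≤ 2 * (‖a‖ + ‖b‖) ^ (k + 1) := by
          gcongr; exact norm_sub_le a b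
      _ ≤ 2 * (2 ^ k * (‖a‖ ^ (k + 1) + ‖b‖ ^ (k + 1))) := by
          gcongr; exact add_pow_le (norm_nonneg a) (norm_nonneg b) (k + 1)
      _ = 2 ^ (k + 1) * (‖a‖ ^ (k + 1) + ‖b‖ ^ (k + 1)) := by ring

section InnerProductSpace

variable {E : Type*} [NormedAddCommGroup E] [InnerProductSpace ℝ E]

lemma two_mul_inner_norm_pow_smul_sub_eq (m : ℕ) (a b : E) :
    2 * ⟪‖a‖ ^ m • a - ‖b‖ ^ m • b, a - b⟫ =
      (‖a‖ ^ m + ‖b‖ ^ m) * ‖a - b‖ ^ 2 + (‖a‖ ^ m - ‖b‖ ^ m) * (‖a‖ ^ 2 - ‖b‖ ^ 2) := by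
  rw [norm_sub_sq_real]
  simp only [inner_sub_left, inner_sub_right, real_inner_smul_left, real_inner_self_eq_norm_sq,
    real_inner_comm a b]
  ring

lemma norm_pow_smul_sub_mul_norm_sub_sq_le (m : ℕ) (a b : E) :
    (‖a‖ ^ m + ‖b‖ ^ m) * ‖a - b‖ ^ 2 ≤ 2 * ⟪‖a‖ ^ m • a - ‖b‖ ^ m • b, a - b⟫ := by
  rw [two_mul_inner_norm_pow_smul_sub_eq]
  exact le_add_of_nonneg_right
    (pow_sub_pow_mul_pow_sub_pow_nonneg (norm_nonneg a) (norm_nonneg b) m 2)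

theorem norm_sub_pow_add_two_le_two_pow_mul_inner (m : ℕ) (a b : E) :
    ‖a - b‖ ^ (m + 2) ≤ 2 ^ m * ⟪‖a‖ ^ m • a - ‖b‖ ^ m • b, a - b⟫ := by
  refine le_of_mul_le_mul_left ?_ (two_pos : (0 : ℝ) < 2)
  calc 2 * ‖a - b‖ ^ (m + 2) = 2 * ‖a - b‖ ^ m * ‖a - b‖ ^ 2 := by ring
    _ ≤ 2 ^ m * (‖a‖ ^ m + ‖b‖ ^ m) * ‖a - b‖ ^ 2 :=
        mul_le_mul_of_nonneg_right (two_mul_norm_sub_pow_le m a b) (by positivity)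
    _ = 2 ^ m * ((‖a‖ ^ m + ‖b‖ ^ m) * ‖a - b‖ ^ 2) := by ring
    _ ≤ 2 ^ m * (2 * ⟪‖a‖ ^ m • a - ‖b‖ ^ m • b, a - b⟫) :=
        mul_le_mul_of_nonneg_left (norm_pow_smul_sub_mul_norm_sub_sq_le m a b) (by positivity)
    _ = 2 * (2 ^ m * ⟪‖a‖ ^ m • a - ‖b‖ ^ m • b, a - b⟫) := by ring

end InnerProductSpace

theorem stmt4 (n : ℕ) (hn : 2 ≤ n) (a₁ a₂ : EuclideanSpace ℝ (Fin n)) :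
    ‖a₁ - a₂‖ ^ n ≤ 2 ^ (n - 2) *
      (inner ℝ ((‖a₁‖ ^ (n - 2)) • a₁ - (‖a₂‖ ^ (n - 2)) • a₂) (a₁ - a₂) : ℝ) := by
  obtain ⟨m, rfl⟩ : ∃ m, n = m + 2 := ⟨n - 2, by omega⟩
  simpa using norm_sub_pow_add_two_le_two_pow_mul_inner m a₁ a₂
end
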